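/- For every natural number k ≥ 2 and every real ε ∈ (0,1), there exists a real polynomial p of degree at most ⌈√(2(k−1)·ln(2/ε))⌉ such that for every N×N complex positive semidefinite matrix ρ with ‖ρ‖ ≤ 1, ‖p(ρ) − ρ^{k−1}‖ ≤ ε, where p(ρ) is the polynomial functional calculus applied to ρ and ‖·‖ is the ℓ²→ℓ² operator norm. -/

import Mathlib

open scoped ComplexOrder

/-- The ℓ²→ℓ² operator norm (largest singular value) of a complex `N × N` matrix. -/
noncomputable def l2OpNorm {N : ℕ} (M : Matrix (Fin N) (Fin N) ℂ) : ℝ :=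
  ‖LinearMap.toContinuousLinearMap (Matrix.toEuclideanLin M)‖

/-!
On `[-1, 1]` we have `x ^ m = ∑ⱼ C(m, j) 2⁻ᵐ T_{2j-m}(x)`: put `x = cos θ` and expand
`((e^{iθ} + e^{-iθ}) / 2) ^ m`. Since `|T_n| ≤ 1` there, dropping the Chebyshev terms of
degree `> d` costs at most the binomial mass of `{j : |2j - m| > d}`. Under the binomial
weights `2j - m` has moment generating function `cosh t ^ m ≤ exp (m t² / 2)`, so a Chernoff
bound makes that mass at most `2 exp (-d² / (2m))`, which is `≤ ε` for
`d = ⌈√(2m log (2/ε))⌉`. A positive semidefinite `ρ` with `‖ρ‖ ≤ 1` has spectrum in `[0, 1]`,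
so the continuous functional calculus transfers the scalar bound to `‖p(ρ) - ρ ^ m‖`.
-/

open Polynomial Polynomial.Chebyshev Real Finset

lemma Complex.sum_choose_mul_exp_eq_two_mul_cosh_pow (m : ℕ) (s : ℂ) :
    ∑ j ∈ range (m + 1), (m.choose j : ℂ) * Complex.exp (s * (2 * j - m)) =
      (2 * Complex.cosh s) ^ m := by
  rw [Complex.two_cosh, add_pow]
  refine sum_congr rfl fun j hj => ?_
  have hjm : j ≤ m := mem_range_succ_iff.1 hj
  rw [← Complex.exp_nat_mul, ← Complex.exp_nat_mul, ← Complex.exp_add, mul_comm]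
  push_cast [hjm]
  ring_nf

lemma Real.sum_choose_mul_exp_eq_two_mul_cosh_pow (m : ℕ) (s : ℝ) :
    ∑ j ∈ range (m + 1), (m.choose j : ℝ) * exp (s * (2 * j - m)) = (2 * cosh s) ^ m := by
  exact_mod_cast Complex.sum_choose_mul_exp_eq_two_mul_cosh_pow m s

lemma Real.cos_pow_eq_sum_choose_mul_cos (m : ℕ) (θ : ℝ) :
    cos θ ^ m = ∑ j ∈ range (m + 1), (m.choose j : ℝ) / 2 ^ m * cos ((2 * j - m) * θ) := by
  have h := congrArg Complex.re
    (Complex.sum_choose_mul_exp_eq_two_mul_cosh_pow m (θ * Complex.I))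
  rw [Complex.cosh_mul_I, show 2 * Complex.cos θ = (2 * cos θ : ℝ) by push_cast; rfl,
    ← Complex.ofReal_pow, Complex.ofReal_re, Complex.re_sum] at h
  rw [← mul_div_cancel_left₀ (cos θ ^ m) (pow_ne_zero m (two_ne_zero' ℝ)), ← mul_pow, ← h,
    sum_div]
  refine sum_congr rfl fun j _ => ?_
  rw [show (θ : ℂ) * Complex.I * (2 * j - m) = ((2 * j - m) * θ : ℝ) * Complex.I by
      push_cast; ring,
    ← Complex.ofReal_natCast, Complex.re_ofReal_mul, Complex.exp_ofReal_mul_I_re]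
  ring

lemma one_le_exp_mul_add_exp_mul_of_lt_abs {d y t : ℝ} (ht : 0 ≤ t) (h : d < |y|) :
    1 ≤ exp (-(t * d)) * (exp (t * y) + exp (-t * y)) := by
  have hy : exp (t * |y|) ≤ exp (t * y) + exp (-t * y) := by
    rcases abs_cases y with ⟨hy, -⟩ | ⟨hy, -⟩ <;> rw [hy] <;> simp [(exp_pos _).le]
  calc 1 ≤ exp (-(t * d)) * exp (t * |y|) := by
        rw [← exp_add, one_le_exp_iff]; nlinarith
    _ ≤ _ := by gcongr

lemma sum_choose_div_two_pow_filter_le_exp_mul_cosh_pow (m : ℕ) (d : ℝ) {t : ℝ}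
    (ht : 0 ≤ t) :
    ∑ j ∈ range (m + 1) with d < |2 * ((j : ℕ) : ℝ) - m|, (m.choose j : ℝ) / 2 ^ m ≤
      2 * exp (-(t * d)) * cosh t ^ m := by
  calc ∑ j ∈ range (m + 1) with d < |2 * ((j : ℕ) : ℝ) - m|, (m.choose j : ℝ) / 2 ^ m
      ≤ ∑ j ∈ range (m + 1) with d < |2 * ((j : ℕ) : ℝ) - m|, (m.choose j : ℝ) / 2 ^ m *
          (exp (-(t * d)) * (exp (t * (2 * j - m)) + exp (-t * (2 * j - m)))) :=
        sum_le_sum fun j hj => le_mul_of_one_le_right (by positivity)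
          (one_le_exp_mul_add_exp_mul_of_lt_abs ht (mem_filter.1 hj).2)
    _ ≤ ∑ j ∈ range (m + 1), (m.choose j : ℝ) / 2 ^ m *
          (exp (-(t * d)) * (exp (t * (2 * j - m)) + exp (-t * (2 * j - m)))) :=
        sum_le_sum_of_subset_of_nonneg (filter_subset _ _) fun _ _ _ => by positivity
    _ = exp (-(t * d)) / 2 ^ m * ((2 * cosh t) ^ m + (2 * cosh (-t)) ^ m) := by
        rw [← Real.sum_choose_mul_exp_eq_two_mul_cosh_pow,
          ← Real.sum_choose_mul_exp_eq_two_mul_cosh_pow, ← sum_add_distrib, mul_sum]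
        refine sum_congr rfl fun j _ => by ring
    _ = 2 * exp (-(t * d)) * cosh t ^ m := by
        rw [cosh_neg, mul_pow]; field_simp; ring

lemma sum_choose_div_two_pow_filter_le_two_mul_exp (m : ℕ) {d : ℝ} (hd : 0 ≤ d) :
    ∑ j ∈ range (m + 1) with d < |2 * ((j : ℕ) : ℝ) - m|, (m.choose j : ℝ) / 2 ^ m ≤
      2 * exp (-d ^ 2 / (2 * m)) := by
  set t := d / m
  refine (sum_choose_div_two_pow_filter_le_exp_mul_cosh_pow m d (by positivity : 0 ≤ t)).trans ?_
  calc 2 * exp (-(t * d)) * cosh t ^ m ≤ 2 * exp (-(t * d)) * exp (t ^ 2 / 2) ^ m := by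
        gcongr; exact cosh_le_exp_half_sq t
    _ = 2 * exp (-d ^ 2 / (2 * m)) := by
        rw [mul_assoc, ← exp_nat_mul, ← exp_add]; congr 2
        rcases eq_or_ne (m : ℝ) 0 with hm | hm <;> simp only [t, hm] <;> field_simp <;> ring

lemma pow_eq_sum_choose_mul_eval_T {x : ℝ} (hx : |x| ≤ 1) (m : ℕ) :
    x ^ m = ∑ j ∈ range (m + 1), (m.choose j : ℝ) / 2 ^ m * (T ℝ (2 * j - m)).eval x := by
  obtain ⟨hx₁, hx₂⟩ := abs_le.1 hx
  rw [← cos_arccos hx₁ hx₂, cos_pow_eq_sum_choose_mul_cos]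
  simp_rw [T_real_cos]
  push_cast
  rfl

noncomputable def truncatedChebyshevPow (m d : ℕ) : ℝ[X] :=
  ∑ j ∈ range (m + 1) with |2 * ((j : ℕ) : ℤ) - m| ≤ d,
    C ((m.choose j : ℝ) / 2 ^ m) * T ℝ (2 * j - m)

lemma natDegree_truncatedChebyshevPow_le (m d : ℕ) :
    (truncatedChebyshevPow m d).natDegree ≤ d := by
  refine natDegree_sum_le_of_forall_le _ _ fun j hj => (natDegree_C_mul_le _ _).trans ?_
  have hj := (mem_filter.1 hj).2
  rw [Int.abs_eq_natAbs] at hj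
  rw [natDegree_T]
  omega

lemma abs_eval_truncatedChebyshevPow_sub_pow_le (m d : ℕ) {x : ℝ} (hx : |x| ≤ 1) :
    |(truncatedChebyshevPow m d).eval x - x ^ m| ≤
      ∑ j ∈ range (m + 1) with (d : ℝ) < |2 * ((j : ℕ) : ℝ) - m|, (m.choose j : ℝ) / 2 ^ m := by
  have heval : (truncatedChebyshevPow m d).eval x = ∑ j ∈ range (m + 1) with
      |2 * ((j : ℕ) : ℤ) - m| ≤ d, (m.choose j : ℝ) / 2 ^ m * (T ℝ (2 * j - m)).eval x := by
    simp only [truncatedChebyshevPow, eval_finsetSum, eval_mul, eval_C]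
  rw [heval, pow_eq_sum_choose_mul_eval_T hx,
    ← sum_filter_add_sum_filter_not (range (m + 1)) (fun j : ℕ => |2 * (j : ℤ) - m| ≤ d),
    sub_add_cancel_left, abs_neg]
  refine (abs_sum_le_sum_abs _ _).trans ?_
  rw [filter_congr (q := fun j : ℕ => (d : ℝ) < |2 * (j : ℝ) - m|) fun j _ => by
    rw [not_le]; exact_mod_cast Iff.rfl]
  refine sum_le_sum fun j _ => ?_
  rw [abs_mul, abs_of_nonneg (by positivity)]
  exact mul_le_of_le_one_right (by positivity) (abs_eval_T_real_le_one _ hx)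

lemma two_mul_exp_neg_natCeil_sqrt_sq_div_le {m ε : ℝ} (hm : 0 < m) (hε : 0 < ε) :
    2 * exp (-(⌈√(2 * m * log (2 / ε))⌉₊ : ℝ) ^ 2 / (2 * m)) ≤ ε := by
  set d := ⌈√(2 * m * log (2 / ε))⌉₊
  have hd : 2 * m * log (2 / ε) ≤ (d : ℝ) ^ 2 := (sqrt_le_iff.1 (Nat.le_ceil _)).2
  have hexp : exp (-log (2 / ε)) = ε / 2 := by rw [exp_neg, exp_log (by positivity), inv_div]
  have : -(d : ℝ) ^ 2 / (2 * m) ≤ -log (2 / ε) := by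
    rw [neg_div, neg_le_neg_iff, le_div_iff₀ (by positivity)]; linarith
  linarith [exp_le_exp.2 this]

lemma CStarAlgebra.norm_aeval_le_of_nonneg {A : Type*} [CStarAlgebra A] [PartialOrder A]
    [StarOrderedRing A] {a : A} (ha : 0 ≤ a) (q : ℝ[X]) {c : ℝ} (hc : 0 ≤ c)
    (hq : ∀ x ∈ Set.Icc 0 ‖a‖, |q.eval x| ≤ c) : ‖aeval a q‖ ≤ c := by
  rw [← cfc_polynomial q a]
  refine norm_cfc_le hc fun x hx => hq x ⟨spectrum_nonneg_of_nonneg ha hx, ?_⟩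
  exact (le_abs_self x).trans (IsometricContinuousFunctionalCalculus.norm_spectrum_le a hx)

open scoped Matrix.Norms.L2Operator MatrixOrder in
lemma l2OpNorm_aeval_le {N : ℕ} {ρ : Matrix (Fin N) (Fin N) ℂ} (hρ : ρ.PosSemidef)
    (hρ1 : l2OpNorm ρ ≤ 1) (q : ℝ[X]) {c : ℝ} (hc : 0 ≤ c)
    (hq : ∀ x ∈ Set.Icc (0 : ℝ) 1, |q.eval x| ≤ c) : l2OpNorm (aeval ρ q) ≤ c :=
  CStarAlgebra.norm_aeval_le_of_nonneg (Matrix.nonneg_iff_posSemidef.2 hρ) q hc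
    fun x hx => hq x ⟨hx.1, hx.2.trans hρ1⟩

theorem exists_poly_block_encoding_power_general (k : ℕ) (hk : 2 ≤ k)
    (ε : ℝ) (hε0 : 0 < ε) :
    ∃ p : Polynomial ℝ,
      p.natDegree ≤ ⌈Real.sqrt (2 * ((k : ℝ) - 1) * Real.log (2 / ε))⌉₊ ∧
      ∀ (N : ℕ) (ρ : Matrix (Fin N) (Fin N) ℂ), ρ.PosSemidef → l2OpNorm ρ ≤ 1 →
        l2OpNorm (Polynomial.aeval ρ p - ρ ^ (k - 1)) ≤ ε := by
  set d := ⌈√(2 * ((k : ℝ) - 1) * log (2 / ε))⌉₊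
  have hm : ((k - 1 : ℕ) : ℝ) = (k : ℝ) - 1 := by rw [Nat.cast_pred (by omega)]
  have hm0 : 0 < (k : ℝ) - 1 := by
    rw [sub_pos]
    exact_mod_cast hk
  refine ⟨truncatedChebyshevPow (k - 1) d, natDegree_truncatedChebyshevPow_le _ d,
    fun N ρ hρ hρ1 => ?_⟩
  rw [← aeval_X_pow (R := ℝ), ← map_sub]
  refine l2OpNorm_aeval_le hρ hρ1 _ hε0.le fun x hx => ?_
  rw [eval_sub, eval_pow, eval_X]
  calc _ ≤ _ :=
        abs_eval_truncatedChebyshevPow_sub_pow_le _ d (abs_le.2 ⟨by linarith [hx.1], hx.2⟩)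
    _ ≤ 2 * exp (-(d : ℝ) ^ 2 / (2 * (k - 1 : ℕ))) :=
      sum_choose_div_two_pow_filter_le_two_mul_exp _ d.cast_nonneg
    _ ≤ ε := hm ▸ two_mul_exp_neg_natCeil_sqrt_sq_div_le hm0 hε0

/-- For every `k ≥ 2` and `ε ∈ (0,1)` there is a real polynomial `p` of degree at most
`⌈√(2(k-1)·ln(2/ε))⌉` such that for every positive semidefinite `ρ` with `‖ρ‖ ≤ 1`,
`‖p(ρ) - ρ^(k-1)‖ ≤ ε`. -/
theorem exists_poly_block_encoding_power (k : ℕ) (hk : 2 ≤ k)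
    (ε : ℝ) (hε0 : 0 < ε) (hε1 : ε < 1) :
    ∃ p : Polynomial ℝ,
      p.natDegree ≤ ⌈Real.sqrt (2 * ((k : ℝ) - 1) * Real.log (2 / ε))⌉₊ ∧
      ∀ (N : ℕ) (ρ : Matrix (Fin N) (Fin N) ℂ), ρ.PosSemidef → l2OpNorm ρ ≤ 1 →
        l2OpNorm (Polynomial.aeval ρ p - ρ ^ (k - 1)) ≤ ε :=
  exists_poly_block_encoding_power_general k hk ε hε0
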